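/- Let $h, u, v, w$ be formal variables and define the formal power series $\mathcal{Z} = \frac{1}{(1-hu)^2 + h^2vw\,t}\exp\left(\frac{v\,a + w\,b}{(1-hu)^2+h^2vw\,t}\right)$ in $\mathbb{Q}[a,b,t][[h,u,v,w]]$. Then the coefficient of $h^{2p'}u^{2p}v^{m+(p'-p)}w^{n+(p'-p)}$ in $\mathcal{Z}$, for integers $p' \ge p \ge 0$, $m,n \ge 0$, equals $\sum_{\beta=0}^{p}\frac{(-1)^{p'-p+\beta}\,2^{2p-2\beta}\,(m+n+p'+p-\beta)!}{(m+n)!\,m!\,n!\,(2p-2\beta)!\,\beta!\,(p'-p)!}\; a^m\,b^n\,t^{p'-p}$. -/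

import Mathlib

open Finset

/-- Coefficient ring `ℚ[a,b,t]`, with `a = X 0`, `b = X 1`, `t = X 2`. -/
abbrev Coeffs : Type := MvPolynomial (Fin 3) ℚ

/-- Formal power series ring in the variables `h = X 0, u = X 1, v = X 2, w = X 3`. -/
abbrev PS : Type := MvPowerSeries (Fin 4) Coeffs

/-- `D = (1 - hu)² + h²vw·t`. -/
noncomputable def D : PS :=
  (1 - MvPowerSeries.X 0 * MvPowerSeries.X 1) ^ 2 +
    MvPowerSeries.X 0 ^ 2 * MvPowerSeries.X 2 * MvPowerSeries.X 3 *
      MvPowerSeries.C (σ := Fin 4) (R := Coeffs) (MvPolynomial.X 2)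

/-- The inverse of `D` (whose constant coefficient is `1`). -/
noncomputable def Dinv : PS := MvPowerSeries.invOfUnit D 1

/-- `E = v·a + w·b`. -/
noncomputable def E : PS :=
  MvPowerSeries.X 2 * MvPowerSeries.C (σ := Fin 4) (R := Coeffs) (MvPolynomial.X 0) +
    MvPowerSeries.X 3 * MvPowerSeries.C (σ := Fin 4) (R := Coeffs) (MvPolynomial.X 1)

/-- Exponential of a power series with zero constant term: since `E * Dinv` has zero
constant term, the coefficient of `(E * Dinv)^μ` at a multidegree of total degree `< μ`
vanishes, so the exponential series truncates coefficientwise. -/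
noncomputable def expEoverD : PS :=
  fun d =>
    ∑ μ ∈ Finset.range (d.sum (fun _ k => k) + 1),
      ((Nat.factorial μ : ℚ)⁻¹) • MvPowerSeries.coeff (σ := Fin 4) (R := Coeffs) d ((E * Dinv) ^ μ)

/-- `Z = D⁻¹ · exp(E/D)`. -/
noncomputable def Z : PS := Dinv * expEoverD

/-!
Write `D = 1 - Y` with `Y = 2hu - h²u² - h²vw·t`. Then `Z = ∑_μ E^μ D^{-(μ+1)} / μ!`, and the
negative binomial series gives `D^{-(μ+1)} = ∑_ν C(μ+ν, μ) Y^ν`. The monomials of `E^μ` involve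
only `v` and `w`, while those of `Y`, hence of every `D^{-(μ+1)}`, have the shape
`h^{b+2c} u^b (vw)^c`. So `h^{2p'} u^{2p} v^{m+q} w^{n+q}` (with `q = p' - p`) splits in only one
way, which forces `μ = m + n` and leaves the coefficient of `h^{2p'} u^{2p} (vw)^q` in
`D^{-(m+n+1)}`. In the trinomial expansion of `Y^ν` that monomial comes only from
`(2hu)^{2p-2β} (-h²u²)^β (-h²vw·t)^q` with `ν = 2p + q - β` and `β ≤ p`, and the binomial
coefficients collect into the stated factorials.
-/

namespace MvPowerSeries

variable {σ R : Type*} [CommRing R]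

theorem coeff_eq_of_truncTotal_eq [Finite σ] {f g : MvPowerSeries σ R} {N : ℕ}
    (h : truncTotal N f = truncTotal N g) {d : σ →₀ ℕ} (hd : d.degree < N) :
    coeff d f = coeff d g := by
  rw [← coeff_truncTotal _ hd, h, coeff_truncTotal _ hd]

theorem coeff_mul_eq_coeff_mul_of_truncTotal_eq [Finite σ] {φ f g : MvPowerSeries σ R} {N : ℕ}
    (h : truncTotal N f = truncTotal N g) {d : σ →₀ ℕ} (hd : d.degree < N) :
    coeff d (φ * f) = coeff d (φ * g) := by
  rw [← coeff_truncTotal_mul_truncTotal_eq_coeff_mul _ _ hd, h,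
    coeff_truncTotal_mul_truncTotal_eq_coeff_mul _ _ hd]

theorem coeff_pow_eq_zero_of_degree_lt {φ : MvPowerSeries σ R} (hφ : constantCoeff φ = 0)
    {d : σ →₀ ℕ} {n : ℕ} (hn : d.degree < n) : coeff d (φ ^ n) = 0 :=
  coeff_eq_zero_of_constantCoeff_nilpotent (m := 1) (by rw [pow_one, hφ]) (by omega)

theorem truncTotal_pow_succ_eq_sum_choose [Finite σ] {φ u : MvPowerSeries σ R}
    (hφ : constantCoeff φ = 0) (hu : u * (1 - φ) = 1) (μ N : ℕ) :
    truncTotal N (u ^ (μ + 1)) =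
      truncTotal N (∑ ν ∈ range N, ((μ + ν).choose μ : R) • φ ^ ν) := by
  have hsubst : PowerSeries.HasSubst φ := PowerSeries.HasSubst.of_constantCoeff_zero hφ
  set f : PowerSeries R := PowerSeries.mk fun n => ((μ + n).choose μ : R)
  have hf : PowerSeries.subst φ f * (1 - φ) ^ (μ + 1) = 1 := by
    have := congrArg (PowerSeries.substAlgHom hsubst)
      (PowerSeries.mk_add_choose_mul_one_sub_pow_eq_one R (d := μ))
    rwa [map_mul, map_pow, map_sub, map_one, PowerSeries.substAlgHom_X,
      PowerSeries.coe_substAlgHom] at this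
  have hu_pow : u ^ (μ + 1) = PowerSeries.subst φ f :=
    calc u ^ (μ + 1) = u ^ (μ + 1) * (PowerSeries.subst φ f * (1 - φ) ^ (μ + 1)) := by
          rw [hf, mul_one]
      _ = PowerSeries.subst φ f * (u * (1 - φ)) ^ (μ + 1) := by rw [mul_pow]; ring
      _ = PowerSeries.subst φ f := by rw [hu, one_pow, mul_one]
  ext d : 1
  simp only [coeff_truncTotal_eq_ite]
  split_ifs with hd
  · rw [hu_pow, PowerSeries.coeff_subst hsubst, finsum_eq_sum_of_support_subset (s := range N)]
    · simp [f, map_sum]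
    · intro ν hν
      simp only [Function.mem_support, coe_range, Set.mem_Iio] at hν ⊢
      by_contra hνN
      exact hν (by rw [coeff_pow_eq_zero_of_degree_lt hφ (by omega), smul_zero])
  · rfl

theorem coeff_pow_eq_zero_of_notMem {S : AddSubmonoid (σ →₀ ℕ)} {φ : MvPowerSeries σ R}
    (hφ : ∀ x ∉ S, coeff x φ = 0) (n : ℕ) {x : σ →₀ ℕ} (hx : x ∉ S) : coeff x (φ ^ n) = 0 := by
  classical
  induction n generalizing x with
  | zero => rw [pow_zero, coeff_one, if_neg (by rintro rfl; exact hx S.zero_mem)]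
  | succ n ih =>
    rw [pow_succ, coeff_mul]
    refine sum_eq_zero fun ⟨a, b⟩ hab => ?_
    rw [HasAntidiagonal.mem_antidiagonal] at hab
    by_cases ha : a ∈ S
    · rw [hφ b (fun hb => hx (hab ▸ S.add_mem ha hb)), mul_zero]
    · rw [ih ha, zero_mul]

theorem coeff_pow_succ_eq_zero_of_notMem [Finite σ] {S : AddSubmonoid (σ →₀ ℕ)}
    {φ u : MvPowerSeries σ R} (hφ₀ : constantCoeff φ = 0) (hφ : ∀ x ∉ S, coeff x φ = 0)
    (hu : u * (1 - φ) = 1) (μ : ℕ) {x : σ →₀ ℕ} (hx : x ∉ S) : coeff x (u ^ (μ + 1)) = 0 := by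
  rw [coeff_eq_of_truncTotal_eq (truncTotal_pow_succ_eq_sum_choose hφ₀ hu μ _)
    (Nat.lt_succ_self x.degree), map_sum]
  exact sum_eq_zero fun ν _ => by rw [coeff_smul, coeff_pow_eq_zero_of_notMem hφ ν hx, mul_zero]

theorem coeff_add_mul_of_unique_add {S T : AddSubmonoid (σ →₀ ℕ)} {φ ψ : MvPowerSeries σ R}
    (hφ : ∀ x ∉ S, coeff x φ = 0) (hψ : ∀ y ∉ T, coeff y ψ = 0) {a b : σ →₀ ℕ}
    (hab : ∀ x ∈ S, ∀ y ∈ T, x + y = a + b → x = a) :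
    coeff (a + b) (φ * ψ) = coeff a φ * coeff b ψ := by
  classical
  rw [coeff_mul, sum_eq_single_of_mem (a, b) (mem_antidiagonal.mpr rfl)]
  rintro ⟨x, y⟩ hxy hne
  rw [HasAntidiagonal.mem_antidiagonal] at hxy
  dsimp only at hxy ⊢
  by_cases hx : x ∈ S
  · by_cases hy : y ∈ T
    · obtain rfl := hab x hx y hy hxy
      exact absurd (by rw [add_left_cancel hxy]) hne
    · rw [hψ y hy, mul_zero]
  · rw [hφ x hx, zero_mul]

theorem monomial_mul_natCast (e : σ →₀ ℕ) (r : R) (n : ℕ) :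
    monomial e r * (n : MvPowerSeries σ R) = monomial e (r * n) := by
  rw [← map_natCast (C (σ := σ)), ← monomial_zero_eq_C_apply, monomial_mul_monomial, add_zero]

theorem add_pow_monomial (e f : σ →₀ ℕ) (r s : R) (n : ℕ) :
    (monomial e r + monomial f s) ^ n =
      ∑ k ∈ range (n + 1), monomial (k • e + (n - k) • f) (r ^ k * s ^ (n - k) * n.choose k) := by
  rw [add_pow]
  refine sum_congr rfl fun k _ => ?_
  rw [monomial_pow, monomial_pow, monomial_mul_monomial, monomial_mul_natCast]

end MvPowerSeries

theorem Finset.sum_ite_eq_ite_of_iff {ι M : Type*} [AddCommMonoid M] {s : Finset ι}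
    {P : ι → Prop} [DecidablePred P] {Q : Prop} [Decidable Q] (a : ι) (f : ι → M)
    (h : ∀ x ∈ s, P x ↔ x = a ∧ Q) (ha : Q → a ∈ s) :
    ∑ x ∈ s, (if P x then f x else 0) = if Q then f a else 0 := by
  by_cases hQ : Q
  · rw [if_pos hQ, sum_eq_single_of_mem a (ha hQ), if_pos ((h a (ha hQ)).2 ⟨rfl, hQ⟩)]
    exact fun x hx hne => if_neg fun hP => hne ((h x hx).1 hP).1
  · rw [if_neg hQ]
    exact sum_eq_zero fun x hx => if_neg fun hP => hQ ((h x hx).1 hP).2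

open MvPowerSeries

noncomputable def huvw (a b c d : ℕ) : Fin 4 →₀ ℕ :=
  Finsupp.single 0 a + Finsupp.single 1 b + Finsupp.single 2 c + Finsupp.single 3 d

theorem fin4_ext_iff {x y : Fin 4 →₀ ℕ} :
    x = y ↔ x 0 = y 0 ∧ x 1 = y 1 ∧ x 2 = y 2 ∧ x 3 = y 3 := by
  simp [Finsupp.ext_iff, Fin.forall_fin_succ]

@[simp] theorem huvw_apply_zero (a b c d : ℕ) : huvw a b c d 0 = a := by simp [huvw]

@[simp] theorem huvw_apply_one (a b c d : ℕ) : huvw a b c d 1 = b := by simp [huvw]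

@[simp] theorem huvw_apply_two (a b c d : ℕ) : huvw a b c d 2 = c := by simp [huvw]

@[simp] theorem huvw_apply_three (a b c d : ℕ) : huvw a b c d 3 = d := by simp [huvw]

theorem degree_huvw (a b c d : ℕ) : (huvw a b c d).degree = a + b + c + d := by
  simp [huvw, map_add, Finsupp.degree_single]

theorem monomial_huvw (a b c d : ℕ) (r : Coeffs) :
    monomial (huvw a b c d) r = C r * X 0 ^ a * X 1 ^ b * X 2 ^ c * X 3 ^ d := by
  simp only [X_pow_eq, ← monomial_zero_eq_C_apply, monomial_mul_monomial, mul_one, zero_add, huvw]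

def vwExponents : AddSubmonoid (Fin 4 →₀ ℕ) where
  carrier := {x | x 0 = 0 ∧ x 1 = 0}
  add_mem' := by intro x y hx hy; simp_all
  zero_mem' := by simp

def dExponents : AddSubmonoid (Fin 4 →₀ ℕ) where
  carrier := {x | x 0 = x 1 + 2 * x 2 ∧ x 2 = x 3}
  add_mem' := by intro x y hx hy; simp only [Set.mem_ofPred_eq, Finsupp.add_apply] at *; omega
  zero_mem' := by simp

@[simp] theorem mem_vwExponents {x : Fin 4 →₀ ℕ} : x ∈ vwExponents ↔ x 0 = 0 ∧ x 1 = 0 :=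
  Iff.rfl

@[simp] theorem mem_dExponents {x : Fin 4 →₀ ℕ} :
    x ∈ dExponents ↔ x 0 = x 1 + 2 * x 2 ∧ x 2 = x 3 :=
  Iff.rfl

noncomputable def Y : PS :=
  monomial (huvw 2 0 1 1) (-MvPolynomial.X 2) +
    (monomial (huvw 2 2 0 0) (-1) + monomial (huvw 1 1 0 0) 2)

theorem one_sub_Y : 1 - Y = D := by
  simp only [Y, D, monomial_huvw, map_neg, map_one, map_ofNat]
  ring

theorem constantCoeff_Y : constantCoeff Y = 0 := by
  rw [← coeff_zero_eq_constantCoeff_apply]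
  simp only [Y, map_add, coeff_monomial]
  simp [fin4_ext_iff]

theorem Dinv_mul_one_sub_Y : Dinv * (1 - Y) = 1 := by
  rw [one_sub_Y]
  exact invOfUnit_mul D 1 (by rw [← one_sub_Y, map_sub, constantCoeff_Y]; simp)

theorem coeff_Y_eq_zero_of_notMem {x : Fin 4 →₀ ℕ} (hx : x ∉ dExponents) : coeff x Y = 0 := by
  simp only [Y, map_add, coeff_monomial]
  split_ifs <;> simp_all

theorem Y_pow (ν : ℕ) :
    Y ^ ν = ∑ k ∈ range (ν + 1), ∑ j ∈ range (ν - k + 1),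
      monomial (k • huvw 2 0 1 1 + (j • huvw 2 2 0 0 + (ν - k - j) • huvw 1 1 0 0))
        ((-MvPolynomial.X 2 : Coeffs) ^ k *
          ((-1) ^ j * 2 ^ (ν - k - j) * ((ν - k).choose j : Coeffs)) * (ν.choose k : Coeffs)) := by
  rw [Y, add_pow]
  refine sum_congr rfl fun k _ => ?_
  rw [add_pow_monomial, monomial_pow, mul_sum, sum_mul]
  refine sum_congr rfl fun j _ => ?_
  rw [monomial_mul_monomial, monomial_mul_natCast]

theorem coeff_Y_pow (p q ν : ℕ) :
    coeff (huvw (2 * (p + q)) (2 * p) q q) (Y ^ ν) =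
      if p + q ≤ ν ∧ ν ≤ 2 * p + q then
        (-MvPolynomial.X 2 : Coeffs) ^ q *
          ((-1) ^ (2 * p + q - ν) * 2 ^ (2 * ν - 2 * (p + q)) *
            ((ν - q).choose (2 * p + q - ν) : Coeffs)) * (ν.choose q : Coeffs)
      else 0 := by
  simp only [Y_pow, map_sum, coeff_monomial]
  rw [sum_congr rfl fun k hk => Finset.sum_ite_eq_ite_of_iff
    (Q := k = q ∧ p + q ≤ ν ∧ ν ≤ 2 * p + q) (2 * p + q - ν) _ (fun j hj => ?_) (fun h => ?_)]
  · rw [Finset.sum_ite_eq_ite_of_iff (Q := p + q ≤ ν ∧ ν ≤ 2 * p + q) q _ (fun k _ => Iff.rfl)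
      (fun h => by simp only [mem_range]; omega)]
    split_ifs with h
    · rw [show ν - q - (2 * p + q - ν) = 2 * ν - 2 * (p + q) by omega]
    · rfl
  · simp only [mem_range] at hk hj
    simp only [fin4_ext_iff, huvw_apply_zero, huvw_apply_one, huvw_apply_two, huvw_apply_three,
      Finsupp.add_apply, Finsupp.smul_apply, smul_eq_mul]
    omega
  · simp only [mem_range] at hk ⊢
    omega

theorem coeff_Dinv_pow (M p q : ℕ) :
    coeff (huvw (2 * (p + q)) (2 * p) q q) (Dinv ^ (M + 1)) =
      ∑ β ∈ range (p + 1), ((M + (2 * p + q - β)).choose M : Coeffs) *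
        ((-MvPolynomial.X 2 : Coeffs) ^ q *
          ((-1) ^ β * 2 ^ (2 * p - 2 * β) * ((2 * p - β).choose β : Coeffs)) *
          ((2 * p + q - β).choose q : Coeffs)) := by
  rw [coeff_eq_of_truncTotal_eq (truncTotal_pow_succ_eq_sum_choose constantCoeff_Y
    Dinv_mul_one_sub_Y M _) (Nat.lt_succ_self _), map_sum]
  simp only [coeff_smul, coeff_Y_pow, mul_ite, mul_zero]
  rw [← sum_filter]
  symm
  refine sum_nbij' (fun β => 2 * p + q - β) (fun ν => 2 * p + q - ν) ?_ ?_ ?_ ?_ ?_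
  all_goals intro x hx; simp only [mem_filter, mem_range, degree_huvw] at hx ⊢
  any_goals omega
  rw [show 2 * p + q - (2 * p + q - x) = x by omega, show 2 * p + q - x - q = 2 * p - x by omega,
    show 2 * (2 * p + q - x) - 2 * (p + q) = 2 * p - 2 * x by omega]

theorem E_eq_monomial : E =
    monomial (huvw 0 0 1 0) (MvPolynomial.X 0) + monomial (huvw 0 0 0 1) (MvPolynomial.X 1) := by
  simp only [E, monomial_huvw]
  ring

theorem constantCoeff_E : constantCoeff E = 0 := by
  rw [← coeff_zero_eq_constantCoeff_apply]
  simp only [E_eq_monomial, map_add, coeff_monomial]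
  simp [fin4_ext_iff]

theorem coeff_E_eq_zero_of_notMem {x : Fin 4 →₀ ℕ} (hx : x ∉ vwExponents) : coeff x E = 0 := by
  simp only [E_eq_monomial, map_add, coeff_monomial]
  split_ifs <;> simp_all

theorem coeff_E_pow (μ m n : ℕ) :
    coeff (huvw 0 0 m n) (E ^ μ) =
      if μ = m + n then MvPolynomial.X 0 ^ m * MvPolynomial.X 1 ^ n * ((m + n).choose m : Coeffs)
      else 0 := by
  rw [E_eq_monomial, add_pow_monomial, map_sum]
  simp only [coeff_monomial]
  rw [Finset.sum_ite_eq_ite_of_iff (Q := μ = m + n) m _ (fun k hk => ?_)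
    (fun h => by simp only [mem_range]; omega)]
  · split_ifs with h
    · subst h
      rw [Nat.add_sub_cancel_left]
    · rfl
  · simp only [mem_range] at hk
    simp only [fin4_ext_iff, huvw_apply_zero, huvw_apply_one, huvw_apply_two, huvw_apply_three,
      Finsupp.add_apply, Finsupp.smul_apply, smul_eq_mul]
    omega

theorem truncTotal_expEoverD (N : ℕ) :
    truncTotal N expEoverD =
      truncTotal N (∑ μ ∈ range N, ((μ.factorial : ℚ)⁻¹) • (E * Dinv) ^ μ) := by
  have hED : constantCoeff (E * Dinv) = 0 := by rw [map_mul, constantCoeff_E, zero_mul]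
  ext x : 1
  simp only [coeff_truncTotal_eq_ite]
  split_ifs with hx
  · rw [coeff_apply, map_sum]
    refine (sum_subset (range_subset_range.mpr hx) fun μ _ hμ => ?_).trans
      (sum_congr rfl fun μ _ => ((coeff x).map_smul_of_tower _ _).symm)
    simp only [mem_range, not_lt] at hμ
    rw [coeff_pow_eq_zero_of_degree_lt hED (by exact hμ), smul_zero]
  · rfl

theorem coeff_Z {d : Fin 4 →₀ ℕ} {N : ℕ} (hd : d.degree < N) :
    coeff d Z = ∑ μ ∈ range N, ((μ.factorial : ℚ)⁻¹) • coeff d (E ^ μ * Dinv ^ (μ + 1)) := by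
  rw [Z, coeff_mul_eq_coeff_mul_of_truncTotal_eq (truncTotal_expEoverD N) hd, mul_sum, map_sum]
  refine sum_congr rfl fun μ _ => ?_
  rw [mul_smul_comm, (coeff d).map_smul_of_tower,
    show Dinv * (E * Dinv) ^ μ = E ^ μ * Dinv ^ (μ + 1) by ring]

theorem coeff_E_pow_mul_Dinv_pow (μ m n p q : ℕ) :
    coeff (huvw 0 0 m n + huvw (2 * (p + q)) (2 * p) q q) (E ^ μ * Dinv ^ (μ + 1)) =
      coeff (huvw 0 0 m n) (E ^ μ) * coeff (huvw (2 * (p + q)) (2 * p) q q) (Dinv ^ (μ + 1)) := by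
  refine coeff_add_mul_of_unique_add (S := vwExponents) (T := dExponents)
    (fun _ hx => coeff_pow_eq_zero_of_notMem (fun _ => coeff_E_eq_zero_of_notMem) μ hx)
    (fun _ hy => coeff_pow_succ_eq_zero_of_notMem constantCoeff_Y
      (fun _ => coeff_Y_eq_zero_of_notMem) Dinv_mul_one_sub_Y μ hy) fun x hx y hy hxy => ?_
  simp only [mem_vwExponents, mem_dExponents] at hx hy
  simp only [fin4_ext_iff, Finsupp.add_apply, huvw_apply_zero, huvw_apply_one, huvw_apply_two,
    huvw_apply_three] at hxy ⊢
  omega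

theorem inv_factorial_smul_choose_mul_eq (m n p q β : ℕ) (hβ : β ≤ p) :
    ((m + n).factorial : ℚ)⁻¹ •
      (MvPolynomial.X 0 ^ m * MvPolynomial.X 1 ^ n * ((m + n).choose m : Coeffs) *
        (((m + n + (2 * p + q - β)).choose (m + n) : Coeffs) *
          ((-MvPolynomial.X 2 : Coeffs) ^ q *
            ((-1) ^ β * 2 ^ (2 * p - 2 * β) * ((2 * p - β).choose β : Coeffs)) *
            ((2 * p + q - β).choose q : Coeffs)))) =
      ((-1 : ℚ) ^ (q + β) * 2 ^ (2 * p - 2 * β) * ((m + n + (p + q) + p - β).factorial : ℚ) /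
          (((m + n).factorial : ℚ) * (m.factorial : ℚ) * (n.factorial : ℚ) *
            ((2 * p - 2 * β).factorial : ℚ) * (β.factorial : ℚ) * (q.factorial : ℚ))) •
        (MvPolynomial.X 0 ^ m * MvPolynomial.X 1 ^ n * MvPolynomial.X 2 ^ q : Coeffs) := by
  obtain ⟨i, rfl⟩ := Nat.exists_eq_add_of_le hβ
  rw [show 2 * (β + i) + q - β = β + 2 * i + q by omega, show 2 * (β + i) - 2 * β = 2 * i by omega,
    show 2 * (β + i) - β = β + 2 * i by omega,
    show m + n + (β + i + q) + (β + i) - β = m + n + (β + 2 * i + q) by omega,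
    ← Nat.choose_symm_add (a := β + 2 * i)]
  have hscalar : ((m + n).factorial : ℚ)⁻¹ * ((m + n).choose m *
      ((m + n + (β + 2 * i + q)).choose (m + n) * ((-1) ^ β * 2 ^ (2 * i) * (β + 2 * i).choose β *
        (β + 2 * i + q).choose (β + 2 * i) * (-1) ^ q))) =
      (-1 : ℚ) ^ (q + β) * 2 ^ (2 * i) * ((m + n + (β + 2 * i + q)).factorial : ℚ) /
        (((m + n).factorial : ℚ) * (m.factorial : ℚ) * (n.factorial : ℚ) *
          ((2 * i).factorial : ℚ) * (β.factorial : ℚ) * (q.factorial : ℚ)) := by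
    rw [Nat.cast_add_choose, Nat.cast_add_choose, Nat.cast_add_choose, Nat.cast_add_choose]
    field_simp
    ring
  rw [← hscalar]
  simp only [MvPolynomial.smul_eq_C_mul, map_mul, map_pow, map_neg, map_one, map_natCast,
    map_ofNat]
  ring

theorem stmt_19 (p p' m n : ℕ) (hpp' : p ≤ p') :
    MvPowerSeries.coeff (σ := Fin 4) (R := Coeffs)
        (Finsupp.single (0 : Fin 4) (2 * p') + Finsupp.single 1 (2 * p) +
          Finsupp.single 2 (m + (p' - p)) + Finsupp.single 3 (n + (p' - p))) Z
      = (∑ β ∈ Finset.range (p + 1),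
            ((-1 : ℚ) ^ (p' - p + β) * 2 ^ (2 * p - 2 * β) *
              (Nat.factorial (m + n + p' + p - β) : ℚ) /
              ((Nat.factorial (m + n) : ℚ) * (Nat.factorial m : ℚ) * (Nat.factorial n : ℚ) *
                (Nat.factorial (2 * p - 2 * β) : ℚ) * (Nat.factorial β : ℚ) *
                (Nat.factorial (p' - p) : ℚ)))) •
          (MvPolynomial.X 0 ^ m * MvPolynomial.X 1 ^ n *
            MvPolynomial.X 2 ^ (p' - p) : Coeffs) := by
  obtain ⟨q, rfl⟩ := Nat.exists_eq_add_of_le hpp'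
  simp only [Nat.add_sub_cancel_left]
  have hd : Finsupp.single (0 : Fin 4) (2 * (p + q)) + Finsupp.single 1 (2 * p) +
      Finsupp.single 2 (m + q) + Finsupp.single 3 (n + q) =
        huvw 0 0 m n + huvw (2 * (p + q)) (2 * p) q q := by
    simp [fin4_ext_iff]
  rw [hd, coeff_Z (Nat.lt_succ_self _)]
  simp only [coeff_E_pow_mul_Dinv_pow, coeff_E_pow, ite_mul, zero_mul, smul_ite, smul_zero]
  rw [sum_ite_eq' _ (m + n), if_pos (by simp [degree_huvw]), coeff_Dinv_pow, mul_sum, smul_sum,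
    sum_smul]
  exact sum_congr rfl fun β hβ =>
    inv_factorial_smul_choose_mul_eq m n p q β (Nat.lt_succ_iff.mp (mem_range.mp hβ))
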